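/- Suppose Ψ : ℝⁿ → ℝ is a positive twice-differentiable function satisfying the linear PDE -(1/λ)qΨ + fᵀ∇Ψ + (1/2)Tr((∇²Ψ)Σ) = 0, where λ > 0 and Σ = λ G R⁻¹ Gᵀ is a constant matrix. Then V = -λ log Ψ satisfies the stationary nonlinear HJB equation 0 = q + (∇V)ᵀf - (1/2)(∇V)ᵀ G R⁻¹ Gᵀ (∇V) + (1/2)Tr((∇²V)Σ). -/

import Mathlib

/-! Hopf–Cole transform: by the chain rule `∇V = -(λ/Ψ) ∇Ψ` and
`∇²V = -(λ/Ψ) ∇²Ψ + (λ/Ψ²) ∇Ψ ∇Ψᵀ`. Since `Σ = λ G R⁻¹ Gᵀ`, the rank-one part of the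
Hessian contributes exactly `(1/2) (∇V)ᵀ G R⁻¹ Gᵀ ∇V` to the trace term and cancels the
quadratic term, so the HJB residual is `-(λ/Ψ)` times the residual of the linear PDE. -/

open Matrix

/-- The Hessian matrix of `f`. -/
noncomputable def hess {n : ℕ} (f : EuclideanSpace ℝ (Fin n) → ℝ)
    (x : EuclideanSpace ℝ (Fin n)) : Matrix (Fin n) (Fin n) ℝ :=
  Matrix.of fun i j => gradient (fun y => gradient f y i) x j

open InnerProductSpace

section GradientCalculus

variable {F : Type*} [NormedAddCommGroup F] [InnerProductSpace ℝ F] [CompleteSpace F]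
  {u v : F → ℝ} {u' v' x : F}

theorem HasDerivAt.comp_hasGradientAt {φ : ℝ → ℝ} {φ' : ℝ} (hφ : HasDerivAt φ φ' (u x))
    (hu : HasGradientAt u u' x) : HasGradientAt (fun y => φ (u y)) (φ' • u') x := by
  rw [hasGradientAt_iff_hasFDerivAt] at hu ⊢
  refine (hφ.comp_hasFDerivAt x hu).congr_fderiv ?_
  rw [map_smul]

theorem HasGradientAt.mul (hu : HasGradientAt u u' x) (hv : HasGradientAt v v' x) :
    HasGradientAt (fun y => u y * v y) (u x • v' + v x • u') x := by
  rw [hasGradientAt_iff_hasFDerivAt] at *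
  refine (hu.mul hv).congr_fderiv ?_
  rw [map_add, map_smul, map_smul]

end GradientCalculus

section Hessian

variable {n : ℕ} {Ψ : EuclideanSpace ℝ (Fin n) → ℝ}

theorem ContDiff.differentiable_gradient_apply (hΨ : ContDiff ℝ 2 Ψ) (i : Fin n) :
    Differentiable ℝ (fun y => gradient Ψ y i) := by
  have h : ContDiff ℝ 1 (fun y => (toDual ℝ _).symm (fderiv ℝ Ψ y)) :=
    (toDual ℝ _).symm.contDiff.comp (hΨ.fderiv_right le_rfl)
  exact ((EuclideanSpace.proj i).contDiff.comp h).differentiable one_ne_zero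

theorem gradient_comp {φ φ' : ℝ → ℝ} (hΨ : Differentiable ℝ Ψ)
    (hφ : ∀ y, HasDerivAt φ (φ' (Ψ y)) (Ψ y)) (y : EuclideanSpace ℝ (Fin n)) :
    gradient (fun y => φ (Ψ y)) y = φ' (Ψ y) • gradient Ψ y :=
  ((hφ y).comp_hasGradientAt (hΨ y).hasGradientAt).gradient

theorem hess_comp {φ φ' : ℝ → ℝ} {φ'' : ℝ} (hΨ : ContDiff ℝ 2 Ψ)
    (hφ : ∀ y, HasDerivAt φ (φ' (Ψ y)) (Ψ y)) (x : EuclideanSpace ℝ (Fin n))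
    (hφ' : HasDerivAt φ' φ'' (Ψ x)) :
    hess (fun y => φ (Ψ y)) x
      = φ' (Ψ x) • hess Ψ x + φ'' • vecMulVec ⇑(gradient Ψ x) ⇑(gradient Ψ x) := by
  have hdiff := hΨ.differentiable two_ne_zero
  ext i j
  have hcoord : (fun y => gradient (fun y => φ (Ψ y)) y i)
      = fun y => φ' (Ψ y) * gradient Ψ y i := by
    funext y; rw [gradient_comp hdiff hφ]; rfl
  have hprod := (hφ'.comp_hasGradientAt (hdiff x).hasGradientAt).mul
    (hΨ.differentiable_gradient_apply i x).hasGradientAt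
  show gradient (fun y => gradient (fun y => φ (Ψ y)) y i) x j = _
  rw [hcoord, hprod.gradient]
  simp only [hess, of_apply, PiLp.add_apply, PiLp.smul_apply, Matrix.add_apply,
    Matrix.smul_apply, vecMulVec_apply, smul_eq_mul]
  ring

end Hessian

theorem stmt4_general {n m : ℕ} (lam : ℝ) (hlam : 0 < lam)
    (q : EuclideanSpace ℝ (Fin n) → ℝ)
    (f : EuclideanSpace ℝ (Fin n) → Fin n → ℝ)
    (G : Matrix (Fin n) (Fin m) ℝ) (R : Matrix (Fin m) (Fin m) ℝ)
    (Ψ : EuclideanSpace ℝ (Fin n) → ℝ) (hΨpos : ∀ x, 0 < Ψ x) (hΨ : ContDiff ℝ 2 Ψ)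
    (Sig : Matrix (Fin n) (Fin n) ℝ) (hSig : Sig = lam • (G * R⁻¹ * Gᵀ))
    (hpde : ∀ x, -(1 / lam) * q x * Ψ x + (f x ⬝ᵥ fun i => gradient Ψ x i)
        + (1 / 2) * Matrix.trace (hess Ψ x * Sig) = 0) :
    ∀ x, (0 : ℝ)
      = q x + (f x ⬝ᵥ fun i => gradient (fun y => -lam * Real.log (Ψ y)) x i)
        - (1 / 2) * ((fun i => gradient (fun y => -lam * Real.log (Ψ y)) x i) ⬝ᵥ
            (G * R⁻¹ * Gᵀ).mulVec fun i => gradient (fun y => -lam * Real.log (Ψ y)) x i)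
        + (1 / 2) * Matrix.trace (hess (fun y => -lam * Real.log (Ψ y)) x * Sig) := by
  intro x
  have hlog : ∀ y, HasDerivAt (fun t => -lam * Real.log t) (-lam / Ψ y) (Ψ y) := fun y => by
    simpa [div_eq_mul_inv] using (Real.hasDerivAt_log (hΨpos y).ne').const_mul (-lam)
  have hinv : HasDerivAt (fun t => -lam / t) (lam / Ψ x ^ 2) (Ψ x) := by
    simpa [div_eq_mul_inv] using (hasDerivAt_inv (hΨpos x).ne').const_mul (-lam)
  set g : Fin n → ℝ := ⇑(gradient Ψ x)
  set M := G * R⁻¹ * Gᵀ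
  have hgradV :
      (fun i => gradient (fun y => -lam * Real.log (Ψ y)) x i) = (-lam / Ψ x) • g := by
    rw [gradient_comp (hΨ.differentiable two_ne_zero) hlog]; rfl
  have hquad : trace (vecMulVec g g * Sig) = lam * (g ⬝ᵥ M *ᵥ g) := by
    rw [hSig, vecMulVec_mul, trace_vecMulVec, vecMul_smul, dotProduct_smul,
      dotProduct_mulVec, dotProduct_comm, smul_eq_mul]
  rw [hgradV, hess_comp hΨ hlog x hinv, Matrix.add_mul, trace_add, smul_mul, smul_mul, trace_smul,
    trace_smul, hquad, dotProduct_smul, smul_dotProduct, mulVec_smul, dotProduct_smul]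
  simp only [smul_eq_mul]
  have hΨx : Ψ x ≠ 0 := (hΨpos x).ne'
  have h := hpde x
  field_simp at h ⊢
  linear_combination Ψ x * h

/-- If positive `C²` `Ψ` solves the stationary linear PDE
`-(1/λ) q Ψ + fᵀ∇Ψ + (1/2)Tr((∇²Ψ)Σ) = 0` with `Σ = λ G R⁻¹ Gᵀ`, then `V = -λ log Ψ`
solves the stationary nonlinear HJB
`0 = q + (∇V)ᵀf - (1/2)(∇V)ᵀ G R⁻¹ Gᵀ (∇V) + (1/2)Tr((∇²V)Σ)`. -/
theorem stmt4 {n m : ℕ} (lam : ℝ) (hlam : 0 < lam)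
    (q : EuclideanSpace ℝ (Fin n) → ℝ)
    (f : EuclideanSpace ℝ (Fin n) → Fin n → ℝ)
    (G : Matrix (Fin n) (Fin m) ℝ) (R : Matrix (Fin m) (Fin m) ℝ) (hR : R.PosDef)
    (Ψ : EuclideanSpace ℝ (Fin n) → ℝ) (hΨpos : ∀ x, 0 < Ψ x) (hΨ : ContDiff ℝ 2 Ψ)
    (Sig : Matrix (Fin n) (Fin n) ℝ) (hSig : Sig = lam • (G * R⁻¹ * Gᵀ))
    (hpde : ∀ x, -(1 / lam) * q x * Ψ x + (f x ⬝ᵥ fun i => gradient Ψ x i)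
        + (1 / 2) * Matrix.trace (hess Ψ x * Sig) = 0) :
    ∀ x, (0 : ℝ)
      = q x + (f x ⬝ᵥ fun i => gradient (fun y => -lam * Real.log (Ψ y)) x i)
        - (1 / 2) * ((fun i => gradient (fun y => -lam * Real.log (Ψ y)) x i) ⬝ᵥ
            (G * R⁻¹ * Gᵀ).mulVec fun i => gradient (fun y => -lam * Real.log (Ψ y)) x i)
        + (1 / 2) * Matrix.trace (hess (fun y => -lam * Real.log (Ψ y)) x * Sig) :=
  stmt4_general lam hlam q f G R Ψ hΨpos hΨ Sig hSig hpde
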